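/- Let N ≥ 2, c > 0, γ ∈ [0,1), b ∈ (0,1), and set a = b^{1−γ}. Let x*₁ = c / Σ_{i=1}^{N} (a + (i/N)(1−a))^{1/(1−γ)} and x*_n = x*₁(a + ((N−n+1)/N)(1−a))^{1/(1−γ)} for n = 2,…,N, and define p ∈ ℝ^N by p_k = (x*_k)^{γ} / Σ_{j=1}^{N} (x*_j)^{γ}. Let B be the N×N real matrix with B_{i,i+1} = 1 for 1 ≤ i ≤ N−1, B_{N,1} = a, and all other entries 0, and let M = (I − 1pᵀ)B, where 1 is the all-ones column vector. Then every complex eigenvalue λ of M satisfies |λ| < 1. -/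

import Mathlib

open Finset Matrix

/-!
Let `M v = μ v` with `v ≠ 0`. Since `pᵀ (I - 1pᵀ) = 0` when `∑ p = 1`, we get `μ (p ⬝ v) = 0`,
and the rows of the eigenvector equation read `μ v_i = v_{i+1} - s`, `μ v_{N-1} = a v_0 - s`
with `s = pᵀ B v`. For `μ ≠ 0, 1` the sequence `(μ - 1) v_i + s` is geometric with ratio `μ`,
and together with `p ⬝ v = 0` this yields the characteristic equation
`μ^N = a + (1 - a) ∑ p_k μ^k`. As `p` is a positive probability vector and `0 ≤ a < 1`, the
right side has modulus at most `a + (1 - a) |μ|^(N-1) < |μ|^N` when `|μ| > 1`, and less than `1`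
when `|μ| = 1`, `μ ≠ 1` (strict triangle inequality for `p_0 + p_1 μ`). Finally `μ = 1` is no
eigenvalue because `(1 - a) ∑ k p_k < N`.
-/

section CyclicShift

variable {R : Type*} [NonAssocSemiring R]

def cyclicShiftMatrix (N : ℕ) (a : R) : Matrix (Fin N) (Fin N) R :=
  of fun i j => if (j : ℕ) = (i : ℕ) + 1 then 1 else if (i : ℕ) = N - 1 ∧ (j : ℕ) = 0 then a else 0

variable {n : ℕ} (a : R) (v : Fin (n + 1) → R)

theorem cyclicShiftMatrix_mulVec_castSucc (i : Fin n) :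
    (cyclicShiftMatrix (n + 1) a *ᵥ v) i.castSucc = v i.succ := by
  rw [mulVec, dotProduct, sum_eq_single i.succ]
  · simp [cyclicShiftMatrix]
  · intro j _ hj
    have hj' : (j : ℕ) ≠ i + 1 := fun h => hj (Fin.ext h)
    simp [cyclicShiftMatrix, hj', i.isLt.ne]
  · simp

theorem cyclicShiftMatrix_mulVec_last :
    (cyclicShiftMatrix (n + 1) a *ᵥ v) (Fin.last n) = a * v 0 := by
  rw [mulVec, dotProduct, sum_eq_single 0]
  · simp [cyclicShiftMatrix]
  · intro j _ hj
    have hj' : (j : ℕ) ≠ n + 1 := j.isLt.ne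
    simp [cyclicShiftMatrix, hj', hj]
  · simp

theorem cyclicShiftMatrix_map {S : Type*} [NonAssocSemiring S] (f : R →+* S) (N : ℕ) (a : R) :
    (cyclicShiftMatrix N a).map f = cyclicShiftMatrix N (f a) := by
  ext i j
  simp only [cyclicShiftMatrix, map_apply, of_apply]
  split_ifs <;> simp

end CyclicShift

section RankOneProjection

variable {K : Type*} [CommRing K] {ι : Type*} [Fintype ι] [DecidableEq ι]

theorem one_sub_replicateRow_mulVec (p w : ι → K) :
    (1 - replicateRow ι p) *ᵥ w = w - Function.const ι (p ⬝ᵥ w) := by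
  rw [sub_mulVec, one_mulVec, replicateRow_mulVec_eq_const]

theorem dotProduct_one_sub_replicateRow_mulVec {p : ι → K} (hp : ∑ i, p i = 1) (w : ι → K) :
    p ⬝ᵥ ((1 - replicateRow ι p) *ᵥ w) = 0 := by
  rw [one_sub_replicateRow_mulVec, dotProduct_sub]
  simp [dotProduct, ← sum_mul, hp]

end RankOneProjection

section Eigenvectors

variable {K : Type*} [Field K] {n : ℕ} {p v : Fin (n + 1) → K} {a μ s : K}

theorem shift_relations_of_mulVec_eq (hp : ∑ i, p i = 1)
    (h : ((1 - replicateRow _ p) * cyclicShiftMatrix (n + 1) a) *ᵥ v = μ • v) :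
    μ * (p ⬝ᵥ v) = 0 ∧ ∃ s, (∀ i : Fin n, μ * v i.castSucc = v i.succ - s) ∧
      μ * v (Fin.last n) = a * v 0 - s := by
  rw [← mulVec_mulVec] at h
  refine ⟨?_, p ⬝ᵥ (cyclicShiftMatrix (n + 1) a *ᵥ v), fun i => ?_, ?_⟩
  · rw [← smul_eq_mul, ← dotProduct_smul, ← h, dotProduct_one_sub_replicateRow_mulVec hp]
  · rw [← smul_eq_mul, ← Pi.smul_apply, ← h, one_sub_replicateRow_mulVec]
    simp [cyclicShiftMatrix_mulVec_castSucc]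
  · rw [← smul_eq_mul, ← Pi.smul_apply, ← h, one_sub_replicateRow_mulVec]
    simp [cyclicShiftMatrix_mulVec_last]

theorem eq_pow_mul_add_geom_sum_mul (hstep : ∀ i : Fin n, μ * v i.castSucc = v i.succ - s)
    (i : Fin (n + 1)) : v i = μ ^ (i : ℕ) * v 0 + (∑ j ∈ range i, μ ^ j) * s := by
  induction i using Fin.induction with
  | zero => simp
  | succ i ih =>
    have h := hstep i
    rw [ih, Fin.val_castSucc] at h
    rw [Fin.val_succ, pow_succ, geom_sum_succ]
    linear_combination -h

theorem pow_eq_of_mulVec_eq_smul (hp : ∑ i, p i = 1) (hv : v ≠ 0) (hμ0 : μ ≠ 0) (hμ1 : μ ≠ 1)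
    (h : ((1 - replicateRow _ p) * cyclicShiftMatrix (n + 1) a) *ᵥ v = μ • v) :
    μ ^ (n + 1) = a + (1 - a) * ∑ i, p i * μ ^ (i : ℕ) := by
  obtain ⟨horth, s, hstep, hlast⟩ := shift_relations_of_mulVec_eq hp h
  replace horth := (mul_eq_zero.mp horth).resolve_left hμ0
  set U := (μ - 1) * v 0 + s
  set f := ∑ i, p i * μ ^ (i : ℕ)
  have hU : ∀ i, (μ - 1) * v i = μ ^ (i : ℕ) * U - s := fun i => by
    rw [eq_pow_mul_add_geom_sum_mul hstep i]
    linear_combination s * geom_sum_mul μ i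
  have hs : s = f * U := by
    have h := congrArg ((μ - 1) * ·) horth
    simp only [dotProduct, mul_sum, mul_left_comm (μ - 1), hU, mul_zero] at h
    have hsum : ∑ i, p i * (μ ^ (i : ℕ) * U - s) = f * U - s := by
      simp only [mul_sub, sum_sub_distrib, ← mul_assoc, ← sum_mul, hp, f]
      ring
    linear_combination hsum - h
  have hend : μ ^ (n + 1) * U = a * U + (1 - a) * s := by
    have h := hU (Fin.last n)
    rw [Fin.val_last] at h
    linear_combination (μ - 1) * hlast - μ * h
  have hU0 : U ≠ 0 := by
    intro hU0
    apply hv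
    funext i
    have h := hU i
    rw [hs, hU0, mul_zero, mul_zero, sub_zero] at h
    exact (mul_eq_zero.mp h).resolve_left (sub_ne_zero.mpr hμ1)
  apply mul_right_cancel₀ hU0
  linear_combination hend + (1 - a) * hs

theorem eq_zero_of_mulVec_eq_self (hp : ∑ i, p i = 1)
    (ha : (1 - a) * ∑ i, p i * (i : ℕ) ≠ n + 1)
    (h : ((1 - replicateRow _ p) * cyclicShiftMatrix (n + 1) a) *ᵥ v = v) : v = 0 := by
  obtain ⟨horth, s, hstep, hlast⟩ := shift_relations_of_mulVec_eq hp (h.trans (one_smul K v).symm)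
  rw [one_mul] at horth hlast
  have hv : ∀ i, v i = v 0 + (i : ℕ) * s := fun i => by
    simpa using eq_pow_mul_add_geom_sum_mul hstep i
  set E := ∑ i, p i * (i : ℕ)
  have hv0 : v 0 + E * s = 0 := by
    rw [← horth, dotProduct, ← one_mul (v 0), ← hp, sum_mul, sum_mul, ← sum_add_distrib]
    exact sum_congr rfl fun i _ => by rw [hv i]; ring
  have hs : s = 0 := by
    rw [hv (Fin.last n), Fin.val_last] at hlast
    refine (mul_eq_zero.mp ?_).resolve_right (sub_ne_zero.mpr ha)
    linear_combination (1 - a) * hv0 - hlast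
  funext i
  rw [hv i, hs, mul_zero, add_zero]
  simpa [hs] using hv0

end Eigenvectors

section UnitDisk

variable {n : ℕ} {μ : ℂ}

theorem norm_add_mul_lt_of_norm_eq_one {s t : ℝ} (hs : 0 < s) (ht : 0 < t) (hμ : ‖μ‖ = 1)
    (hμ1 : μ ≠ 1) : ‖(s : ℂ) + t * μ‖ < s + t := by
  have hnorms : ‖(s : ℂ)‖ + ‖(t : ℂ) * μ‖ = s + t := by
    rw [norm_mul, hμ, mul_one, Complex.norm_real, Complex.norm_real, Real.norm_of_nonneg hs.le,
      Real.norm_of_nonneg ht.le]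
  refine (norm_add_le _ _).trans_eq hnorms |>.lt_of_ne fun heq => hμ1 ?_
  rw [← hnorms, Complex.norm_add_eq_iff, Complex.arg_ofReal_of_nonneg hs.le,
    Complex.arg_real_mul _ ht] at heq
  have hμ0 : μ ≠ 0 := by rintro rfl; simp at hμ
  rcases heq with h | h | h
  · simp [hs.ne'] at h
  · simp [ht.ne', hμ0] at h
  · rw [← Complex.norm_mul_exp_arg_mul_I μ, hμ, ← h]
    simp

theorem norm_sum_mul_pow_le {p : Fin (n + 1) → ℝ} (hp : ∀ i, 0 ≤ p i) (hp1 : ∑ i, p i = 1)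
    (hμ : 1 ≤ ‖μ‖) :
    ‖∑ i, (p i : ℂ) * μ ^ (i : ℕ)‖ ≤ ‖μ‖ ^ n := by
  calc ‖∑ i, (p i : ℂ) * μ ^ (i : ℕ)‖ ≤ ∑ i, p i * ‖μ‖ ^ (i : ℕ) := by
        refine (norm_sum_le _ _).trans_eq (sum_congr rfl fun i _ => ?_)
        rw [norm_mul, norm_pow, Complex.norm_real, Real.norm_of_nonneg (hp i)]
    _ ≤ ∑ i, p i * ‖μ‖ ^ n :=
        sum_le_sum fun i _ => mul_le_mul_of_nonneg_left
          (pow_le_pow_right₀ hμ (Nat.lt_succ_iff.mp i.isLt)) (hp i)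
    _ = ‖μ‖ ^ n := by rw [← sum_mul, hp1, one_mul]

theorem norm_sum_mul_pow_lt_one {p : Fin (n + 2) → ℝ} (hp : ∀ i, 0 < p i) (hp1 : ∑ i, p i = 1)
    (hμ : ‖μ‖ = 1) (hμ1 : μ ≠ 1) : ‖∑ i, (p i : ℂ) * μ ^ (i : ℕ)‖ < 1 := by
  rw [Fin.sum_univ_succ, Fin.sum_univ_succ, ← add_assoc]
  rw [Fin.sum_univ_succ, Fin.sum_univ_succ, ← add_assoc] at hp1
  simp only [Fin.val_zero, Fin.val_succ, pow_zero, mul_one, zero_add, pow_one]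
  have hrest : ‖∑ i : Fin n, (p i.succ.succ : ℂ) * μ ^ ((i : ℕ) + 1 + 1)‖ ≤
      ∑ i : Fin n, p i.succ.succ := by
    refine (norm_sum_le _ _).trans_eq (sum_congr rfl fun i _ => ?_)
    rw [norm_mul, norm_pow, hμ, one_pow, mul_one, Complex.norm_real, Real.norm_of_nonneg (hp _).le]
  calc _ ≤ _ := norm_add_le _ _
    _ < _ := add_lt_add_of_lt_of_le (norm_add_mul_lt_of_norm_eq_one (hp 0) (hp 1) hμ hμ1) hrest
    _ = 1 := hp1

theorem norm_lt_one_of_pow_eq {p : Fin (n + 2) → ℝ} (hp : ∀ i, 0 < p i) (hp1 : ∑ i, p i = 1)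
    {a : ℝ} (ha0 : 0 ≤ a) (ha1 : a < 1) (hμ1 : μ ≠ 1)
    (h : μ ^ (n + 2) = a + (1 - a) * ∑ i, (p i : ℂ) * μ ^ (i : ℕ)) : ‖μ‖ < 1 := by
  set f := ∑ i, (p i : ℂ) * μ ^ (i : ℕ)
  have hnorm : ‖μ‖ ^ (n + 2) ≤ a + (1 - a) * ‖f‖ := by
    rw [← norm_pow, h]
    refine (norm_add_le _ _).trans_eq ?_
    rw [norm_mul, Complex.norm_real, Real.norm_of_nonneg ha0, ← Complex.ofReal_one,
      ← Complex.ofReal_sub, Complex.norm_real, Real.norm_of_nonneg (by linarith)]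
  by_contra! hμ
  rcases hμ.eq_or_lt with hμ | hμ
  · have := norm_sum_mul_pow_lt_one hp hp1 hμ.symm hμ1
    rw [← hμ, one_pow] at hnorm
    nlinarith
  · have := norm_sum_mul_pow_le (fun i => (hp i).le) hp1 hμ.le
    have : 1 ≤ ‖μ‖ ^ (n + 1) := one_le_pow₀ hμ.le
    rw [pow_succ] at hnorm
    nlinarith

end UnitDisk

theorem pos_and_sum_eq_one_of_eq_div_sum {ι : Type*} [Fintype ι] [Nonempty ι] {w p : ι → ℝ}
    (hw : ∀ i, 0 < w i) (hp : ∀ i, p i = w i / ∑ j, w j) : (∀ i, 0 < p i) ∧ ∑ i, p i = 1 := by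
  have hS : 0 < ∑ j, w j := sum_pos (fun j _ => hw j) univ_nonempty
  refine ⟨fun i => hp i ▸ div_pos (hw i) hS, ?_⟩
  simp only [hp, ← sum_div, div_self hS.ne']

theorem one_sub_mul_sum_mul_val_lt {n : ℕ} {p : Fin (n + 1) → ℝ} (hp : ∀ i, 0 ≤ p i)
    (hp1 : ∑ i, p i = 1) {a : ℝ} (ha : 0 ≤ a) :
    (1 - a) * ∑ i, p i * (i : ℕ) < n + 1 := by
  have hE : ∑ i, p i * (i : ℕ) ≤ n := by
    calc ∑ i, p i * (i : ℕ) ≤ ∑ i, p i * n :=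
          sum_le_sum fun i _ => mul_le_mul_of_nonneg_left
            (by exact_mod_cast Nat.lt_succ_iff.mp i.isLt) (hp i)
      _ = n := by rw [← sum_mul, hp1, one_mul]
  have hE0 : 0 ≤ ∑ i, p i * (i : ℕ) := sum_nonneg fun i _ => mul_nonneg (hp i) (Nat.cast_nonneg _)
  nlinarith

theorem fixedPoint_pos {N : ℕ} (hN : 0 < N) {c γ a : ℝ} (hc : 0 < c) (ha0 : 0 < a)
    (ha1 : a ≤ 1) {x : Fin N → ℝ}
    (hx1 : x ⟨0, hN⟩ = c / ∑ i ∈ range N, (a + (((i : ℝ) + 1) / N) * (1 - a)) ^ (1 / (1 - γ)))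
    (hxn : ∀ i : Fin N, 0 < (i : ℕ) →
      x i = x ⟨0, hN⟩ * (a + (((N : ℝ) - (i : ℕ)) / N) * (1 - a)) ^ (1 / (1 - γ)))
    (i : Fin N) : 0 < x i := by
  have hbase : ∀ t : ℝ, 0 ≤ t → 0 < (a + t * (1 - a)) ^ (1 / (1 - γ)) := fun t ht =>
    Real.rpow_pos_of_pos (add_pos_of_pos_of_nonneg ha0 (mul_nonneg ht (sub_nonneg.mpr ha1))) _
  have hx0 : 0 < x ⟨0, hN⟩ :=
    hx1 ▸ div_pos hc (sum_pos (fun i _ => hbase _ (by positivity)) (nonempty_range_iff.mpr hN.ne'))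
  rcases Nat.eq_zero_or_pos i with hi | hi
  · rwa [show i = ⟨0, hN⟩ from Fin.ext hi]
  · rw [hxn i hi]
    refine mul_pos hx0 (hbase _ (div_nonneg (sub_nonneg.mpr ?_) (Nat.cast_nonneg _)))
    exact_mod_cast i.isLt.le

open Finset in
/-- Local asymptotic stability of the homogeneous G-AIMD index-policy dynamics:
with `a = b^(1-γ)`, the fixed point `x*`, the probability vector
`p_k = (x*_k)^γ / ∑_j (x*_j)^γ`, the Leslie-type matrix `B` (superdiagonal `1`,
corner entry `B_{N,1} = a`), and the linearization matrix `M = (I - 1pᵀ) B`,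
every complex eigenvalue of `M` has modulus strictly less than one. -/
theorem gaimd_linearization_spectral_radius_lt_one
    (N : ℕ) (hN : 2 ≤ N) (c γ b : ℝ) (hc : 0 < c)
    (hγ : γ ∈ Set.Ico (0 : ℝ) 1) (hb : b ∈ Set.Ioo (0 : ℝ) 1)
    (a : ℝ) (ha : a = b ^ (1 - γ))
    (xstar : Fin N → ℝ)
    (hx1 : xstar ⟨0, by omega⟩ = c / ∑ i ∈ Finset.range N,
      (a + (((i : ℝ) + 1) / N) * (1 - a)) ^ (1 / (1 - γ)))
    (hxn : ∀ i : Fin N, 0 < (i : ℕ) → xstar i = xstar ⟨0, by omega⟩ *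
      (a + (((N : ℝ) - (i : ℕ)) / N) * (1 - a)) ^ (1 / (1 - γ)))
    (p : Fin N → ℝ)
    (hp : ∀ k : Fin N, p k = (xstar k) ^ γ / ∑ j : Fin N, (xstar j) ^ γ)
    (B : Matrix (Fin N) (Fin N) ℝ)
    (hB : ∀ i j : Fin N, B i j =
      if (j : ℕ) = (i : ℕ) + 1 then 1
      else if (i : ℕ) = N - 1 ∧ (j : ℕ) = 0 then a else 0)
    (M : Matrix (Fin N) (Fin N) ℝ)
    (hM : M = (1 - Matrix.of fun _ j : Fin N => p j) * B) :
    ∀ lam : ℂ,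
      (∃ v : Fin N → ℂ, v ≠ 0 ∧ (M.map Complex.ofReal).mulVec v = lam • v) →
      ‖lam‖ < 1 := by
  rintro μ ⟨v, hv, hμv⟩
  have ha0 : 0 < a := ha ▸ Real.rpow_pos_of_pos hb.1 _
  have ha1 : a < 1 := ha ▸ Real.rpow_lt_one hb.1.le hb.2 (sub_pos.mpr hγ.2)
  have hx := fixedPoint_pos (by omega) hc ha0 ha1.le hx1 hxn
  obtain ⟨n, rfl⟩ := Nat.exists_eq_add_of_le' hN
  obtain ⟨hp0, hp1⟩ := pos_and_sum_eq_one_of_eq_div_sum (fun i => Real.rpow_pos_of_pos (hx i) γ) hp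
  have hMC : M.map Complex.ofReal =
      (1 - replicateRow _ fun i => (p i : ℂ)) * cyclicShiftMatrix (n + 2) (a : ℂ) := by
    rw [hM, show B = cyclicShiftMatrix _ a from Matrix.ext hB]
    show Complex.ofRealHom.mapMatrix _ = _
    simp only [map_mul, map_sub, map_one, RingHom.mapMatrix_apply, cyclicShiftMatrix_map]
    rfl
  have hp1C : ∑ i, (p i : ℂ) = 1 := by exact_mod_cast hp1
  rw [hMC] at hμv
  rcases eq_or_ne μ 0 with rfl | hμ0
  · simp
  rcases eq_or_ne μ 1 with rfl | hμ1
  · refine absurd (eq_zero_of_mulVec_eq_self hp1C ?_ (hμv.trans (one_smul ℂ v))) hv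
    exact_mod_cast (one_sub_mul_sum_mul_val_lt (fun i => (hp0 i).le) hp1 ha0.le).ne
  exact norm_lt_one_of_pow_eq hp0 hp1 ha0.le ha1 hμ1
    (by exact_mod_cast pow_eq_of_mulVec_eq_smul hp1C hv hμ0 hμ1 hμv)
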